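/- If p and q are distinct points in βX \ υX, then C_p ≠ C_q as subsets (and hence as subrings) of C(X). -/

import Mathlib

open Filter Topology

variable {X : Type*} [TopologicalSpace X]

/-- The continuous extension `f* : βX → ℝ ∪ {∞}` of `f ∈ C(X)` to the Stone–Čech
compactification, with values in the one-point compactification of `ℝ`. -/
noncomputable def fstar (f : C(X, ℝ)) : StoneCech X → OnePoint ℝ :=
  stoneCechExtend (OnePoint.continuous_coe.comp f.continuous)

/-- The set `C_p = {f ∈ C(X) : f*(p) ∈ ℝ}`. -/
def Cp (p : StoneCech X) : Set C(X, ℝ) :=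
  {f : C(X, ℝ) | ∃ r : ℝ, fstar f p = (r : OnePoint ℝ)}

/-- The Hewitt realcompactification `υX`, viewed as the set of points of `βX` at which
every `f ∈ C(X)` has a real value. -/
def upsilon (X : Type*) [TopologicalSpace X] : Set (StoneCech X) :=
  {p | ∀ f : C(X, ℝ), ∃ r : ℝ, fstar f p = (r : OnePoint ℝ)}

/-!
Pick `f` with `f*(p) = ∞` and, using normality of `βX`, a continuous `g : βX → [0, 1]` that is
`1` near `p` and `0` near `q`. Then `h = f · (g ∘ ι)` satisfies `h* = f*` near `p` and `h* = 0`
near `q`, so `h ∈ C_q \ C_p`.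
-/

theorem exists_continuous_eventually_one_eventually_zero {Y : Type*} [TopologicalSpace Y]
    [T2Space Y] [NormalSpace Y] {p q : Y} (hpq : p ≠ q) :
    ∃ g : C(Y, ℝ), (∀ᶠ y in 𝓝 p, g y = 1) ∧ ∀ᶠ y in 𝓝 q, g y = 0 := by
  obtain ⟨U, V, hU, hV, hpU, hqV, hUV⟩ := t2_separation hpq
  obtain ⟨K, hK, hKc, hKU⟩ := exists_mem_nhds_isClosed_subset (hU.mem_nhds hpU)
  obtain ⟨L, hL, hLc, hLV⟩ := exists_mem_nhds_isClosed_subset (hV.mem_nhds hqV)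
  obtain ⟨g, hg0, hg1, -⟩ :=
    exists_continuous_zero_one_of_isClosed hLc hKc (hUV.symm.mono hLV hKU)
  exact ⟨g, Filter.mem_of_superset hK fun y hy => hg1 hy,
    Filter.mem_of_superset hL fun y hy => hg0 hy⟩

theorem fstar_stoneCechUnit (f : C(X, ℝ)) (x : X) :
    fstar f (stoneCechUnit x) = ((f x : ℝ) : OnePoint ℝ) :=
  congrFun (stoneCechExtend_extends (OnePoint.continuous_coe.comp f.continuous)) x

theorem fstar_eqOn_of_isOpen {f : C(X, ℝ)} {U : Set (StoneCech X)} (hU : IsOpen U)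
    {c : StoneCech X → OnePoint ℝ} (hc : Continuous c)
    (h : ∀ x : X, stoneCechUnit x ∈ U → ((f x : ℝ) : OnePoint ℝ) = c (stoneCechUnit x)) :
    Set.EqOn (fstar f) c U := by
  have hclosed : IsClosed {z | fstar f z = c z} := isClosed_eq (continuous_stoneCechExtend _) hc
  have hsub : U ∩ Set.range stoneCechUnit ⊆ {z | fstar f z = c z} := by
    rintro _ ⟨hxU, x, rfl⟩
    simpa [fstar_stoneCechUnit] using h x hxU
  exact fun z hz => hclosed.closure_subset
    (closure_mono hsub (denseRange_stoneCechUnit.open_subset_closure_inter hU hz))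

theorem fstar_mul_comp_of_eventually_eq_one (f : C(X, ℝ)) {g : C(StoneCech X, ℝ)}
    {p : StoneCech X} (hg : ∀ᶠ z in 𝓝 p, g z = 1) :
    fstar (f * g.comp ⟨stoneCechUnit, continuous_stoneCechUnit⟩) p = fstar f p := by
  obtain ⟨U, hgU, hU, hpU⟩ := eventually_nhds_iff.1 hg
  refine fstar_eqOn_of_isOpen hU (continuous_stoneCechExtend _) (fun x hx => ?_) hpU
  simp [hgU _ hx]

theorem fstar_mul_comp_of_eventually_eq_zero (f : C(X, ℝ)) {g : C(StoneCech X, ℝ)}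
    {p : StoneCech X} (hg : ∀ᶠ z in 𝓝 p, g z = 0) :
    fstar (f * g.comp ⟨stoneCechUnit, continuous_stoneCechUnit⟩) p = ((0 : ℝ) : OnePoint ℝ) := by
  obtain ⟨U, hgU, hU, hpU⟩ := eventually_nhds_iff.1 hg
  exact fstar_eqOn_of_isOpen hU continuous_const (fun x hx => by simp [hgU _ hx]) hpU

theorem exists_fstar_eq_infty_of_notMem_upsilon {p : StoneCech X} (hp : p ∉ upsilon X) :
    ∃ f : C(X, ℝ), fstar f p = OnePoint.infty := by
  obtain ⟨f, hf⟩ := not_forall.1 hp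
  exact ⟨f, not_not.1 fun h => hf ((OnePoint.ne_infty_iff_exists.1 h).imp fun _ => Eq.symm)⟩

theorem statement3_general (p q : StoneCech X)
    (hp : p ∉ upsilon X) (hpq : p ≠ q) :
    Cp p ≠ Cp q := by
  obtain ⟨f, hf⟩ := exists_fstar_eq_infty_of_notMem_upsilon hp
  obtain ⟨g, hg1, hg0⟩ := exists_continuous_eventually_one_eventually_zero hpq
  set h := f * g.comp ⟨stoneCechUnit, continuous_stoneCechUnit⟩
  have hhp : h ∉ Cp p := by
    rintro ⟨r, hr⟩
    rw [fstar_mul_comp_of_eventually_eq_one f hg1, hf] at hr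
    exact OnePoint.coe_ne_infty r hr.symm
  have hhq : h ∈ Cp q := ⟨0, fstar_mul_comp_of_eventually_eq_zero f hg0⟩
  exact fun heq => hhp (heq ▸ hhq)

/-- If `p` and `q` are distinct points in `βX \ υX`, then `C_p ≠ C_q`. -/
theorem statement3 [T2Space X] [CompletelyRegularSpace X] (p q : StoneCech X)
    (hp : p ∉ upsilon X) (hq : q ∉ upsilon X) (hpq : p ≠ q) :
    Cp p ≠ Cp q :=
  statement3_general p q hp hpq
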